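/- A list segment model containing a stack-referenced interior location is not atomic: if (s,h) ⊨ sls(x,y) with h nonempty, and ℓ ∈ dom(h) is a location with ℓ ∈ img(s) and ℓ ≠ s(x), then there exist nonempty disjoint heaps h1, h2 with h = h1 ⊎ h2, (s,h1) ⊨ sls(x,p) and (s,h2) ⊨ sls(p,y), where p is any variable with s(p) = ℓ. -/

import Mathlib

section

variable {Vars Loc : Type*}

/-- Domain of a heap. -/
def hdom (h : Loc → Option Loc) : Set Loc := {l | h l ≠ none}

/-- Image of a heap. -/
def himg (h : Loc → Option Loc) : Set Loc := {l | ∃ l', h l' = some l}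

/-- Disjointness of heaps (disjoint domains). -/
def HDisj (h1 h2 : Loc → Option Loc) : Prop := Disjoint (hdom h1) (hdom h2)

/-- Disjoint union of heaps (left-biased union, used under disjointness). -/
def hunion (h1 h2 : Loc → Option Loc) : Loc → Option Loc :=
  fun l => (h1 l).orElse (fun _ => h2 l)

/-- The singly-linked list segment predicate `sls`, defined inductively:
either the segment is empty (`a = b`, empty heap), or `a ≠ b`, `a` points to
some `l`, and the rest of the heap is a list segment from `l` to `b`. -/
inductive Sls : (Loc → Option Loc) → Loc → Loc → Prop
  | nil (h : Loc → Option Loc) (a : Loc) (he : ∀ l, h l = none) : Sls h a a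
  | cons (h h' : Loc → Option Loc) (a b l : Loc) (hab : a ≠ b)
      (ha : h a = some l) (ha' : h' a = none)
      (hrest : ∀ m, m ≠ a → h m = h' m) (tail : Sls h' l b) : Sls h a b

/-! Cutting a list segment from `a` to `b` at an allocated cell `l` gives a segment from `a` to
`l` and one from `l` to `b`: by induction on the segment, either `l` is its head (and the first
piece is empty) or `l` lies in the tail, whose split is extended by the head cell. The two pieces
are nonempty as soon as `l ≠ a`, since a segment between distinct endpoints allocates its start
and a segment from `l` never allocates its own end `l`. -/

theorem hunion_eq_none_iff {h1 h2 : Loc → Option Loc} {l : Loc} :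
    hunion h1 h2 l = none ↔ h1 l = none ∧ h2 l = none := by
  cases e : h1 l <;> simp [hunion, e]

theorem hdom_hunion (h1 h2 : Loc → Option Loc) :
    hdom (hunion h1 h2) = hdom h1 ∪ hdom h2 := by
  ext l
  simp only [hdom, Set.mem_ofPred_eq, Set.mem_union, Ne, hunion_eq_none_iff]
  tauto

theorem hdom_update_some [DecidableEq Loc] (h : Loc → Option Loc) (a v : Loc) :
    hdom (Function.update h a (some v)) = insert a (hdom h) := by
  ext l
  rcases eq_or_ne l a with rfl | hla <;> simp [hdom, *]

theorem hunion_update_some [DecidableEq Loc] (h1 h2 : Loc → Option Loc) (a v : Loc) :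
    hunion (Function.update h1 a (some v)) h2 = Function.update (hunion h1 h2) a (some v) := by
  funext l
  rcases eq_or_ne l a with rfl | hla <;> simp [hunion, *]

namespace Sls

theorem start_mem_hdom {h : Loc → Option Loc} {a b : Loc} (hsls : Sls h a b) (hab : a ≠ b) :
    a ∈ hdom h := by
  cases hsls with
  | nil => exact absurd rfl hab
  | cons _ _ _ _ _ _ ha => simp [hdom, ha]

theorem end_not_mem_hdom {h : Loc → Option Loc} {a b : Loc} (hsls : Sls h a b) :
    b ∉ hdom h := by
  induction hsls with
  | nil h a he => simp [hdom, he]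
  | cons h h' a b _ hab _ _ hrest _ ih =>
    simpa [hdom, hrest b hab.symm] using ih

theorem split {h : Loc → Option Loc} {a b l : Loc} (hsls : Sls h a b) (hl : l ∈ hdom h) :
    ∃ h1 h2, HDisj h1 h2 ∧ h = hunion h1 h2 ∧ Sls h1 a l ∧ Sls h2 l b := by
  classical
  induction hsls with
  | nil h a he => exact absurd (he l) hl
  | cons h h' a b m hab ha ha' hrest tail ih =>
    rcases eq_or_ne l a with rfl | hla
    · refine ⟨fun _ => none, h, ?_, ?_, nil _ _ fun _ => rfl, cons h h' l b m hab ha ha' hrest tail⟩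
      · simp [HDisj, hdom]
      · funext n
        simp [hunion]
    have hl' : l ∈ hdom h' := by rwa [hdom, Set.mem_ofPred_eq, ← hrest l hla]
    obtain ⟨h1, h2, hdisj, rfl, hs1, hs2⟩ := ih hl'
    obtain ⟨h1a, h2a⟩ := hunion_eq_none_iff.mp ha'
    refine ⟨Function.update h1 a (some m), h2, ?_, ?_, ?_, hs2⟩
    · rw [HDisj, hdom_update_some, Set.disjoint_insert_left]
      exact ⟨fun ha2 => ha2 h2a, hdisj⟩
    · rw [hunion_update_some]
      exact Function.eq_update_iff.mpr ⟨ha, hrest⟩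
    · exact cons _ h1 a l m (Ne.symm hla) (by simp) h1a
        (fun n hn => Function.update_of_ne hn _ _) hs1

end Sls

theorem stmt11_general (s : Vars → Loc) (x y p : Vars) (h : Loc → Option Loc)
    (hsls : Sls h (s x) (s y)) (l : Loc)
    (hl : l ∈ hdom h) (hlx : l ≠ s x)
    (hp : s p = l) :
    ∃ h1 h2, hdom h1 ≠ ∅ ∧ hdom h2 ≠ ∅ ∧ HDisj h1 h2 ∧ h = hunion h1 h2 ∧
      Sls h1 (s x) (s p) ∧ Sls h2 (s p) (s y) := by
  subst hp
  obtain ⟨h1, h2, hdisj, rfl, hs1, hs2⟩ := hsls.split hl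
  have hp2 : s p ∈ hdom h2 := by
    rw [hdom_hunion] at hl
    exact hl.resolve_left hs1.end_not_mem_hdom
  exact ⟨h1, h2, Set.nonempty_iff_ne_empty.mp ⟨s x, hs1.start_mem_hdom hlx.symm⟩,
    Set.nonempty_iff_ne_empty.mp ⟨s p, hp2⟩, hdisj, rfl, hs1, hs2⟩

/-- A list segment model containing a stack-referenced interior location can be
split into two nonempty list segments, hence it is not atomic. -/
theorem stmt11 (s : Vars → Loc) (x y p : Vars) (h : Loc → Option Loc)
    (hsls : Sls h (s x) (s y)) (hne : hdom h ≠ ∅) (l : Loc)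
    (hl : l ∈ hdom h) (himgs : l ∈ Set.range s) (hlx : l ≠ s x)
    (hp : s p = l) :
    ∃ h1 h2, hdom h1 ≠ ∅ ∧ hdom h2 ≠ ∅ ∧ HDisj h1 h2 ∧ h = hunion h1 h2 ∧
      Sls h1 (s x) (s p) ∧ Sls h2 (s p) (s y) :=
  stmt11_general s x y p h hsls l hl hlx hp

end
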